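/- arXiv:2602.15815 — 2 statements merged into one kernel-verified Lean document; each statement's English description precedes it below -/
import Mathlib

section
/- Equivalently ordered representations: for pairs of distributions (P,Q) and (P',Q') with tradeoff functions τ, τ' and hockey-stick curves h, h', the pointwise inequality τ ≥ τ' holds (τ dominates τ' pointwise on [0,1]) if and only if h ≤ h' pointwise on (0,∞). -/
open MeasureTheory Filter Set
open scoped ENNReal NNReal

/-- Hockey-stick divergence `H_x(P‖Q) = sup_E P(E) - x Q(E)` over measurable events. -/
noncomputable def hsDiv {Ω : Type*} [MeasurableSpace Ω] (x : ℝ) (P Q : Measure Ω) : ℝ :=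
  ⨆ E : {E : Set Ω // MeasurableSet E}, ((P E).toReal - x * (Q E).toReal)

/-- Tradeoff function `T_α(P‖Q)`: the infimum of Type II errors `1 - ∫ φ dQ` over
measurable randomized tests `φ : Ω → [0,1]` with Type I error `∫ φ dP ≤ α`. -/
noncomputable def tradeoff {Ω : Type*} [MeasurableSpace Ω] (P Q : Measure Ω) (α : ℝ) : ℝ :=
  sInf {β : ℝ | ∃ φ : Ω → ℝ, Measurable φ ∧ (∀ ω, φ ω ∈ Set.Icc (0 : ℝ) 1) ∧
    (∫ ω, φ ω ∂P) ≤ α ∧ β = 1 - ∫ ω, φ ω ∂Q}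

/-!
The tradeoff function `τ` is convex on `[0, ∞)`, and the hockey-stick curve is its conjugate:
`h(x) = sup_{α ∈ [0,1]} (1 - α - x τ(α))` for `x ≥ 0`. Here `≤` holds because each event `E`
gives the test `1_{Eᶜ}`, and `≥` because, by the layer-cake formula, `∫ ψ dP - x ∫ ψ dQ` is an
average of values `P(E) - x Q(E)` for any test `ψ`. So `τ ≥ τ'` gives `h ≤ h'` at once.

Conversely, `τ'` is also lower semicontinuous on `[0, ∞)`; at `0` this comes from the Lebesgue
decomposition of `Q'` with respect to `P'`: a test of small `P'`-mass catches little more of `Q'`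
than its singular part. So if `τ(α) < τ'(α)`, Hahn–Banach separates `(α, τ(α))` from the closed
convex epigraph of `τ'` by a line of slope `-1/x` with `x > 0` (the slope is negative because
`τ'(1) = 0 ≤ τ(α)`), and evaluating the conjugacy formula at this `x` gives `h'(x) < h(x)`.
-/

open scoped Topology

theorem ConvexOn.exists_affine_lt_of_lt {E : Type*} [AddCommGroup E] [Module ℝ E]
    [TopologicalSpace E] [IsTopologicalAddGroup E] [ContinuousSMul ℝ E] [LocallyConvexSpace ℝ E]
    {s : Set E} {f : E → ℝ} (hf : ConvexOn ℝ s f) (hs : IsClosed s)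
    (hf' : LowerSemicontinuousOn f s) {a : E} (ha : a ∈ s) {c : ℝ} (hc : c < f a) :
    ∃ (ℓ : StrongDual ℝ E) (b : ℝ), c < ℓ a + b ∧ ∀ x ∈ s, ℓ x + b < f x := by
  obtain ⟨L, u, hLepi, hLa⟩ := geometric_hahn_banach_closed_point (x := (a, c))
    hf.convex_epigraph ((lowerSemicontinuousOn_iff_isClosed_epigraph hs).1 hf')
    (fun h => hc.not_ge h.2)
  set k := L (0, 1)
  have hL : ∀ x y, L (x, y) = L (x, 0) + y * k := fun x y => by
    rw [← smul_eq_mul, ← L.map_smul, ← L.map_add, Prod.smul_mk, smul_zero, smul_eq_mul, mul_one,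
      Prod.mk_add_mk, add_zero, zero_add]
  have hLepi' : ∀ x ∈ s, L (x, 0) + f x * k < u := fun x hx => hL x (f x) ▸ hLepi _ ⟨hx, le_rfl⟩
  rw [hL] at hLa
  -- the separating line is not vertical: it separates `(a, c)` from `(a, f a)`
  have hk : 0 < -k := by nlinarith [hLepi' a ha]
  have hℓ : ∀ x, (-k)⁻¹ * L (x, 0) + u / k = (L (x, 0) - u) / -k := fun x => by
    field_simp
    ring
  refine ⟨(-k)⁻¹ • L.comp (ContinuousLinearMap.inl ℝ E ℝ), u / k, ?_, fun x hx => ?_⟩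
  · simp only [FunLike.coe_smul, ContinuousLinearMap.coe_comp, Pi.smul_apply,
      Function.comp_apply, ContinuousLinearMap.inl_apply, smul_eq_mul, hℓ, lt_div_iff₀ hk]
    linarith
  · simp only [FunLike.coe_smul, ContinuousLinearMap.coe_comp, Pi.smul_apply,
      Function.comp_apply, ContinuousLinearMap.inl_apply, smul_eq_mul, hℓ, div_lt_iff₀ hk]
    linarith [hLepi' x hx]

theorem exists_nat_lintegral_mul_le {Ω : Type*} [MeasurableSpace Ω] {μ : Measure Ω}
    {f : Ω → ℝ≥0∞} (hf : Measurable f) (hfi : ∫⁻ a, f a ∂μ ≠ ∞) {ε : ℝ≥0∞} (hε : ε ≠ 0) :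
    ∃ n : ℕ, ∀ g : Ω → ℝ≥0∞, (∀ a, g a ≤ 1) →
      ∫⁻ a, g a * f a ∂μ ≤ n * ∫⁻ a, g a ∂μ + ε := by
  obtain ⟨δ, hδ, hδε⟩ := exists_pos_setLIntegral_lt_of_measure_lt hfi hε
  obtain ⟨n, hn⟩ := ENNReal.exists_nat_mul_gt hδ.ne' hfi
  have hn0 : (n : ℝ≥0∞) ≠ 0 := by
    rintro h
    simp [h] at hn
  have htail : μ {a | (n : ℝ≥0∞) ≤ f a} < δ :=
    (meas_ge_le_lintegral_div hf.aemeasurable hn0 (ENNReal.natCast_ne_top n)).trans_lt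
      (ENNReal.div_lt_of_lt_mul' hn)
  have hsplit : ∀ g : Ω → ℝ≥0∞, (∀ a, g a ≤ 1) →
      ∀ a, g a * f a ≤ n * g a + {a | (n : ℝ≥0∞) ≤ f a}.indicator f a := fun g hg a => by
    by_cases h : (n : ℝ≥0∞) ≤ f a
    · rw [indicator_of_mem (show a ∈ {a | (n : ℝ≥0∞) ≤ f a} from h)]
      exact (mul_le_of_le_one_left' (hg a)).trans le_add_self
    · rw [indicator_of_notMem (show a ∉ {a | (n : ℝ≥0∞) ≤ f a} from h), add_zero, mul_comm]
      gcongr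
      exact (not_le.1 h).le
  refine ⟨n, fun g hg => ?_⟩
  calc ∫⁻ a, g a * f a ∂μ
      ≤ ∫⁻ a, (n * g a + {a | (n : ℝ≥0∞) ≤ f a}.indicator f a) ∂μ :=
        lintegral_mono (hsplit g hg)
    _ = n * ∫⁻ a, g a ∂μ + ∫⁻ a in {a | (n : ℝ≥0∞) ≤ f a}, f a ∂μ := by
        rw [lintegral_add_right _ (hf.indicator (measurableSet_le measurable_const hf)),
          lintegral_const_mul' _ _ (ENNReal.natCast_ne_top n),
          lintegral_indicator (measurableSet_le measurable_const hf)]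
    _ ≤ n * ∫⁻ a, g a ∂μ + ε := by gcongr; exact (hδε _ htail).le

theorem exists_null_lintegral_le {Ω : Type*} [MeasurableSpace Ω] (P Q : Measure Ω)
    [IsFiniteMeasure Q] [Q.HaveLebesgueDecomposition P] :
    ∃ N, MeasurableSet N ∧ P N = 0 ∧ ∀ ε ≠ 0, ∃ n : ℕ, ∀ g : Ω → ℝ≥0∞, Measurable g →
      (∀ a, g a ≤ 1) → ∫⁻ a, g a ∂Q ≤ Q N + n * ∫⁻ a, g a ∂P + ε := by
  obtain ⟨S, hS, hQS, hPS⟩ := Q.mutuallySingular_singularPart P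
  refine ⟨Sᶜ, hS.compl, hPS, fun ε hε => ?_⟩
  obtain ⟨n, hn⟩ := exists_nat_lintegral_mul_le (Q.measurable_rnDeriv P)
    (Q.lintegral_rnDeriv_lt_top P).ne hε
  refine ⟨n, fun g hg hg1 => ?_⟩
  have hsing : ∫⁻ a, g a ∂(Q.singularPart P) ≤ Q Sᶜ :=
    calc ∫⁻ a, g a ∂(Q.singularPart P) ≤ Q.singularPart P univ := by
          simpa using lintegral_mono hg1
      _ = Q.singularPart P Sᶜ := by rw [← measure_add_measure_compl hS, hQS, zero_add]
      _ ≤ Q Sᶜ := Q.singularPart_le P Sᶜ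
  calc ∫⁻ a, g a ∂Q
      = ∫⁻ a, g a ∂(Q.singularPart P) + ∫⁻ a, g a * Q.rnDeriv P a ∂P := by
        conv_lhs => rw [Q.haveLebesgueDecomposition_add P]
        rw [lintegral_add_measure,
          lintegral_withDensity_eq_lintegral_mul _ (Q.measurable_rnDeriv P) hg]
        simp only [Pi.mul_apply, mul_comm]
    _ ≤ Q Sᶜ + (n * ∫⁻ a, g a ∂P + ε) := add_le_add hsing (hn g hg1)
    _ = Q Sᶜ + n * ∫⁻ a, g a ∂P + ε := (add_assoc _ _ _).symm

section Tests

variable {Ω : Type*} [MeasurableSpace Ω]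

structure IsTest (φ : Ω → ℝ) : Prop where
  measurable : Measurable φ
  mem_Icc : ∀ ω, φ ω ∈ Icc (0 : ℝ) 1

namespace IsTest

variable {φ : Ω → ℝ}

theorem integrable (hφ : IsTest φ) (μ : Measure Ω) [IsFiniteMeasure μ] : Integrable φ μ :=
  (integrable_const (1 : ℝ)).mono' hφ.measurable.aestronglyMeasurable <| ae_of_all _ fun ω => by
    rw [Real.norm_eq_abs, abs_of_nonneg (hφ.mem_Icc ω).1]
    exact (hφ.mem_Icc ω).2

theorem integral_le_one (hφ : IsTest φ) (μ : Measure Ω) [IsProbabilityMeasure μ] :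
    ∫ ω, φ ω ∂μ ≤ 1 := by
  simpa using integral_mono (hφ.integrable μ) (integrable_const 1) fun ω => (hφ.mem_Icc ω).2

theorem integral_one_sub (hφ : IsTest φ) (μ : Measure Ω) [IsProbabilityMeasure μ] :
    ∫ ω, 1 - φ ω ∂μ = 1 - ∫ ω, φ ω ∂μ := by
  rw [integral_sub (integrable_const 1) (hφ.integrable μ), integral_const, probReal_univ,
    one_smul]

theorem one_sub (hφ : IsTest φ) : IsTest fun ω => 1 - φ ω :=
  ⟨measurable_const.sub hφ.measurable, fun ω => by
    obtain ⟨h0, h1⟩ := hφ.mem_Icc ω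
    constructor <;> linarith⟩

theorem integral_eq_integral_Ioc_measureReal_le (hφ : IsTest φ) (μ : Measure Ω)
    [IsFiniteMeasure μ] : ∫ ω, φ ω ∂μ = ∫ t in Ioc 0 1, μ.real {ω | t ≤ φ ω} :=
  (hφ.integrable μ).integral_eq_integral_Ioc_meas_le (ae_of_all _ fun ω => (hφ.mem_Icc ω).1)
    (ae_of_all _ fun ω => (hφ.mem_Icc ω).2)

end IsTest

theorem isTest_const {a : ℝ} (ha : a ∈ Icc (0 : ℝ) 1) : IsTest fun _ : Ω => a :=
  ⟨measurable_const, fun _ => ha⟩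

theorem isTest_indicator_one {E : Set Ω} (hE : MeasurableSet E) : IsTest (E.indicator 1) :=
  ⟨measurable_one.indicator hE, fun ω => by by_cases h : ω ∈ E <;> simp [h]⟩

theorem convex_isTest : Convex ℝ {φ : Ω → ℝ | IsTest φ} := fun _ hφ _ hψ l m hl hm hlm =>
  ⟨(hφ.measurable.const_smul l).add (hψ.measurable.const_smul m), fun ω =>
    convex_Icc (0 : ℝ) 1 (hφ.mem_Icc ω) (hψ.mem_Icc ω) hl hm hlm⟩

end Tests

theorem integrableOn_measureReal_le {Ω : Type*} [MeasurableSpace Ω] (μ : Measure Ω)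
    [IsFiniteMeasure μ] (φ : Ω → ℝ) : IntegrableOn (fun t => μ.real {ω | t ≤ φ ω}) (Ioc 0 1) := by
  have hanti : AntitoneOn (fun t => μ.real {ω | t ≤ φ ω}) (Icc 0 1) := fun _ _ _ _ hst =>
    measureReal_mono (fun ω (hω : _ ≤ φ ω) => hst.trans hω) (measure_ne_top μ _)
  exact (hanti.integrableOn_isCompact isCompact_Icc).mono_set Ioc_subset_Icc_self

section Tradeoff

variable {Ω : Type*} [MeasurableSpace Ω] {P Q : Measure Ω} {α : ℝ}

theorem le_tradeoff {b : ℝ} (hα : 0 ≤ α)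
    (h : ∀ φ : Ω → ℝ, IsTest φ → ∫ ω, φ ω ∂P ≤ α → b ≤ 1 - ∫ ω, φ ω ∂Q) :
    b ≤ tradeoff P Q α :=
  le_csInf ⟨1, fun _ => 0, measurable_const, by simp, by simpa using hα, by simp⟩
    (by rintro _ ⟨φ, hφm, hφ, hP, rfl⟩; exact h φ ⟨hφm, hφ⟩ hP)

theorem tradeoff_le [IsProbabilityMeasure Q] {φ : Ω → ℝ} (hφ : IsTest φ) (hP : ∫ ω, φ ω ∂P ≤ α) :
    tradeoff P Q α ≤ 1 - ∫ ω, φ ω ∂Q :=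
  csInf_le ⟨0, by rintro _ ⟨ψ, hψm, hψ, -, rfl⟩; linarith [(IsTest.mk hψm hψ).integral_le_one Q]⟩
    ⟨φ, hφ.1, hφ.2, hP, rfl⟩

theorem exists_isTest_lt_tradeoff_add (hα : 0 ≤ α) {ε : ℝ} (hε : 0 < ε) :
    ∃ φ : Ω → ℝ, IsTest φ ∧ ∫ ω, φ ω ∂P ≤ α ∧ 1 - ∫ ω, φ ω ∂Q < tradeoff P Q α + ε := by
  by_contra! h
  linarith [le_tradeoff hα h]

theorem tradeoff_nonneg [IsProbabilityMeasure Q] : 0 ≤ tradeoff P Q α :=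
  Real.sInf_nonneg <| by
    rintro _ ⟨φ, hφm, hφ, -, rfl⟩
    linarith [(IsTest.mk hφm hφ).integral_le_one Q]

theorem tradeoff_one [IsProbabilityMeasure P] [IsProbabilityMeasure Q] : tradeoff P Q 1 = 0 := by
  refine le_antisymm ?_ tradeoff_nonneg
  simpa using tradeoff_le (P := P) (Q := Q) (isTest_const (a := 1) ⟨zero_le_one, le_rfl⟩)
    (by simp)

theorem tradeoff_measureReal_le [IsProbabilityMeasure Q] {E : Set Ω} (hE : MeasurableSet E) :
    tradeoff P Q (P.real E) ≤ 1 - Q.real E := by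
  simpa [integral_indicator_one hE] using
    tradeoff_le (Q := Q) (isTest_indicator_one hE) (integral_indicator_one hE).le

variable (P Q)

theorem convexOn_tradeoff [IsFiniteMeasure P] [IsProbabilityMeasure Q] :
    ConvexOn ℝ (Ici 0) (tradeoff P Q) := by
  refine ⟨convex_Ici 0, fun a ha b hb l m hl hm hlm => le_of_forall_pos_le_add fun ε hε => ?_⟩
  obtain ⟨φ, hφ, hφP, hφQ⟩ := exists_isTest_lt_tradeoff_add (P := P) (Q := Q) ha hε
  obtain ⟨ψ, hψ, hψP, hψQ⟩ := exists_isTest_lt_tradeoff_add (P := P) (Q := Q) hb hε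
  have hmix : IsTest (l • φ + m • ψ) := convex_isTest hφ hψ hl hm hlm
  have hint : ∀ μ : Measure Ω, [IsFiniteMeasure μ] →
      ∫ ω, (l • φ + m • ψ) ω ∂μ = l * ∫ ω, φ ω ∂μ + m * ∫ ω, ψ ω ∂μ := fun μ _ => by
    simp only [Pi.add_apply, Pi.smul_apply, smul_eq_mul]
    rw [integral_add ((hφ.integrable μ).const_mul l) ((hψ.integrable μ).const_mul m),
      integral_const_mul, integral_const_mul]
  calc tradeoff P Q (l • a + m • b)
      ≤ 1 - ∫ ω, (l • φ + m • ψ) ω ∂Q :=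
        tradeoff_le hmix (by rw [hint]; simp only [smul_eq_mul]; gcongr)
    _ = l * (1 - ∫ ω, φ ω ∂Q) + m * (1 - ∫ ω, ψ ω ∂Q) := by
        rw [hint]
        linear_combination -hlm
    _ ≤ l * (tradeoff P Q a + ε) + m * (tradeoff P Q b + ε) := by gcongr
    _ = l • tradeoff P Q a + m • tradeoff P Q b + ε := by
        simp only [smul_eq_mul]
        linear_combination ε * hlm

theorem exists_tradeoff_zero_le [IsFiniteMeasure P] [IsProbabilityMeasure Q] {ε : ℝ} (hε : 0 < ε) :
    ∃ C : ℝ, ∀ α, 0 ≤ α → tradeoff P Q 0 ≤ tradeoff P Q α + C * α + ε := by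
  obtain ⟨N, hN, hPN, hQN⟩ := exists_null_lintegral_le P Q
  obtain ⟨n, hn⟩ := hQN (ENNReal.ofReal ε) (by simpa using hε)
  refine ⟨n, fun α hα => ?_⟩
  have h0 : tradeoff P Q 0 ≤ 1 - Q.real N := by
    simpa [measureReal_def, hPN] using tradeoff_measureReal_le (P := P) (Q := Q) hN
  suffices 1 - Q.real N - n * α - ε ≤ tradeoff P Q α by linarith
  refine le_tradeoff hα fun φ hφ hφP => ?_
  have hofReal : ∀ μ : Measure Ω, [IsFiniteMeasure μ] →
      ENNReal.ofReal (∫ ω, φ ω ∂μ) = ∫⁻ ω, ENNReal.ofReal (φ ω) ∂μ := fun μ _ =>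
    ofReal_integral_eq_lintegral_ofReal (hφ.integrable μ) (ae_of_all _ fun ω => (hφ.mem_Icc ω).1)
  have hQ : ENNReal.ofReal (∫ ω, φ ω ∂Q) ≤ ENNReal.ofReal (Q.real N + n * α + ε) := by
    rw [ENNReal.ofReal_add (by positivity) hε.le, ENNReal.ofReal_add measureReal_nonneg
      (by positivity), ENNReal.ofReal_mul (Nat.cast_nonneg n), ENNReal.ofReal_natCast,
      ofReal_measureReal, hofReal]
    refine (hn _ hφ.measurable.ennreal_ofReal fun ω =>
      ENNReal.ofReal_le_one.2 (hφ.mem_Icc ω).2).trans ?_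
    rw [← hofReal]
    gcongr
  linarith [(ENNReal.ofReal_le_ofReal_iff (by positivity)).1 hQ]

theorem lowerSemicontinuousOn_tradeoff [IsFiniteMeasure P] [IsProbabilityMeasure Q] :
    LowerSemicontinuousOn (tradeoff P Q) (Ici 0) := by
  intro α hα
  rcases (mem_Ici.1 hα).eq_or_lt with rfl | hα
  · intro y hy
    obtain ⟨C, hC⟩ := exists_tradeoff_zero_le P Q (half_pos (sub_pos.2 hy))
    have hCt : ∀ᶠ t in 𝓝 (0 : ℝ), C * t < (tradeoff P Q 0 - y) / 2 :=
      ((continuous_const_mul C).tendsto' 0 0 (mul_zero C)).eventually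
        (eventually_lt_nhds (half_pos (sub_pos.2 hy)))
    filter_upwards [self_mem_nhdsWithin, nhdsWithin_le_nhds hCt] with t ht htC
    linarith [hC t ht]
  · have hcont := (convexOn_tradeoff P Q).continuousOn_interior
    rw [interior_Ici] at hcont
    exact (hcont.continuousAt (Ioi_mem_nhds hα)).lowerSemicontinuousAt.lowerSemicontinuousWithinAt _

end Tradeoff

section HockeyStick

variable {Ω : Type*} [MeasurableSpace Ω] {P Q : Measure Ω} {x : ℝ}

theorem le_hsDiv [IsProbabilityMeasure P] (hx : 0 ≤ x) {E : Set Ω} (hE : MeasurableSet E) :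
    P.real E - x * Q.real E ≤ hsDiv x P Q :=
  le_ciSup (f := fun E : {E : Set Ω // MeasurableSet E} => P.real E - x * Q.real E)
    ⟨1, by rintro _ ⟨E, rfl⟩; nlinarith [measureReal_le_one (μ := P) (s := E.1),
      measureReal_nonneg (μ := Q) (s := E.1)]⟩ ⟨E, hE⟩

theorem hsDiv_le {b : ℝ} (h : ∀ E, MeasurableSet E → P.real E - x * Q.real E ≤ b) :
    hsDiv x P Q ≤ b :=
  haveI : Nonempty {E : Set Ω // MeasurableSet E} := ⟨⟨∅, .empty⟩⟩
  ciSup_le fun E => h E.1 E.2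

theorem integral_sub_mul_le_hsDiv [IsProbabilityMeasure P] [IsFiniteMeasure Q] (hx : 0 ≤ x)
    {ψ : Ω → ℝ} (hψ : IsTest ψ) :
    ∫ ω, ψ ω ∂P - x * ∫ ω, ψ ω ∂Q ≤ hsDiv x P Q := by
  rw [hψ.integral_eq_integral_Ioc_measureReal_le P, hψ.integral_eq_integral_Ioc_measureReal_le Q,
    ← integral_const_mul, ← integral_sub (integrableOn_measureReal_le P ψ)
      ((integrableOn_measureReal_le Q ψ).const_mul x)]
  calc ∫ t in Ioc 0 1, (P.real {ω | t ≤ ψ ω} - x * Q.real {ω | t ≤ ψ ω})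
      ≤ ∫ t in Ioc (0 : ℝ) 1, hsDiv x P Q :=
        setIntegral_mono_on ((integrableOn_measureReal_le P ψ).sub
          ((integrableOn_measureReal_le Q ψ).const_mul x)) (integrableOn_const (by simp))
          measurableSet_Ioc fun t _ => le_hsDiv hx (hψ.measurable measurableSet_Ici)
    _ = hsDiv x P Q := by simp

theorem one_sub_sub_mul_tradeoff_le_hsDiv [IsProbabilityMeasure P] [IsProbabilityMeasure Q]
    (hx : 0 ≤ x) {α : ℝ} (hα : 0 ≤ α) :
    1 - α - x * tradeoff P Q α ≤ hsDiv x P Q := by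
  refine le_of_forall_pos_le_add fun ε hε => ?_
  obtain ⟨φ, hφ, hφP, hφQ⟩ :=
    exists_isTest_lt_tradeoff_add (P := P) (Q := Q) hα (div_pos hε (by linarith : 0 < x + 1))
  have hψ := integral_sub_mul_le_hsDiv (P := P) (Q := Q) hx hφ.one_sub
  rw [hφ.integral_one_sub, hφ.integral_one_sub] at hψ
  have hxε : x * (ε / (x + 1)) ≤ ε := by
    rw [mul_div_assoc', div_le_iff₀ (by linarith)]
    nlinarith
  nlinarith [mul_le_mul_of_nonneg_left hφQ.le hx]

theorem hsDiv_le_of_forall_tradeoff [IsProbabilityMeasure P] [IsProbabilityMeasure Q]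
    (hx : 0 ≤ x) {b : ℝ}
    (h : ∀ α ∈ Icc (0 : ℝ) 1, 1 - α - x * tradeoff P Q α ≤ b) : hsDiv x P Q ≤ b :=
  hsDiv_le fun E hE => by
    have hτ := tradeoff_measureReal_le (P := P) (Q := Q) hE.compl
    have hb := h (P.real Eᶜ) ⟨measureReal_nonneg, measureReal_le_one⟩
    simp only [probReal_compl_eq_one_sub hE] at hτ hb
    nlinarith [mul_le_mul_of_nonneg_left hτ hx]

end HockeyStick

theorem exists_hsDiv_lt_of_tradeoff_lt {Ω Ω' : Type*} [MeasurableSpace Ω] [MeasurableSpace Ω']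
    {P Q : Measure Ω} {P' Q' : Measure Ω'} [IsProbabilityMeasure P] [IsProbabilityMeasure Q]
    [IsProbabilityMeasure P'] [IsProbabilityMeasure Q'] {α : ℝ} (hα : α ∈ Icc (0 : ℝ) 1)
    (hlt : tradeoff P Q α < tradeoff P' Q' α) : ∃ x > 0, hsDiv x P' Q' < hsDiv x P Q := by
  obtain ⟨ℓ, b, hα', hline⟩ := (convexOn_tradeoff P' Q').exists_affine_lt_of_lt isClosed_Ici
    (lowerSemicontinuousOn_tradeoff P' Q') (mem_Ici.2 hα.1) hlt
  have hℓ : ∀ t, ℓ t = t * ℓ 1 := fun t => by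
    rw [← smul_eq_mul, ← ℓ.map_smul, smul_eq_mul, mul_one]
  rw [hℓ] at hα'
  have hslope : ℓ 1 < 0 := by
    have h1 := hline 1 (mem_Ici.2 zero_le_one)
    rw [hℓ, tradeoff_one] at h1
    nlinarith [tradeoff_nonneg (P := P) (Q := Q) (α := α), hα.2]
  set x := -(ℓ 1)⁻¹ with hxdef
  have hx : 0 < x := neg_pos.2 (inv_lt_zero.2 hslope)
  have hxℓ : x * ℓ 1 = -1 := by rw [hxdef, neg_mul, inv_mul_cancel₀ hslope.ne]
  have hlow : 1 - x * b < hsDiv x P Q := by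
    refine lt_of_lt_of_le ?_ (one_sub_sub_mul_tradeoff_le_hsDiv hx.le hα.1)
    have hαx : x * (α * ℓ 1 + b) = -α + x * b := by linear_combination α * hxℓ
    linarith [mul_lt_mul_of_pos_left hα' hx]
  have hup : hsDiv x P' Q' ≤ 1 - x * b :=
    hsDiv_le_of_forall_tradeoff hx.le fun t ht => by
      have htx : x * (t * ℓ 1 + b) = -t + x * b := by linear_combination t * hxℓ
      linarith [mul_lt_mul_of_pos_left (hℓ t ▸ hline t ht.1) hx]
  exact ⟨x, hx, hup.trans_lt hlow⟩

/-- For pairs `(P,Q)` and `(P',Q')` with tradeoff functions `τ, τ'` and hockey-stick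
curves `h, h'`: `τ ≥ τ'` pointwise on `[0,1]` iff `h ≤ h'` pointwise on `(0,∞)`. -/
theorem stmt6 {Ω Ω' : Type*} [MeasurableSpace Ω] [MeasurableSpace Ω']
    (P Q : Measure Ω) (P' Q' : Measure Ω')
    [IsProbabilityMeasure P] [IsProbabilityMeasure Q]
    [IsProbabilityMeasure P'] [IsProbabilityMeasure Q'] :
    (∀ α ∈ Set.Icc (0 : ℝ) 1, tradeoff P' Q' α ≤ tradeoff P Q α) ↔
      (∀ x > (0 : ℝ), hsDiv x P Q ≤ hsDiv x P' Q') := by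
  constructor
  · intro h x hx
    refine hsDiv_le_of_forall_tradeoff hx.le fun α hα => le_trans ?_
      (one_sub_sub_mul_tradeoff_le_hsDiv hx.le hα.1)
    exact sub_le_sub_left (mul_le_mul_of_nonneg_left (h α hα) hx.le) _
  · intro h α hα
    by_contra! hlt
    obtain ⟨x, hx, hlt'⟩ := exists_hsDiv_lt_of_tradeoff_lt hα hlt
    exact (h x hx).not_gt hlt'
end

section
/- For PLDs L₁ and L₂ and their convolution L₁ ⊕ L₂, the hockey-stick curves satisfy h_{L₁⊕L₂}(x) = E_{Z∼L₁}[ h_{L₂}(x e^{-Z}) ] for all x > 0. -/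
open MeasureTheory Filter Set
open scoped ENNReal NNReal

/-- `e^{-z}` for `z : EReal`, valued in `ℝ≥0∞` (with `e^{-∞} = 0`). -/
noncomputable def expNegE (z : EReal) : ℝ≥0∞ :=
  if z = ⊤ then 0 else if z = ⊥ then ⊤ else ENNReal.ofReal (Real.exp (-z.toReal))

/-- A privacy loss distribution: a probability measure on `ℝ ∪ {∞}` (no mass at `-∞`)
with `E[e^{-Z}] ≤ 1`. -/
def IsPLD (L : Measure EReal) : Prop :=
  IsProbabilityMeasure L ∧ L {⊥} = 0 ∧ ∫⁻ z, expNegE z ∂L ≤ 1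

/-- The integrand `max (0, 1 - x e^{-z})` for `z : EReal` (so `z = ∞` gives `1`). -/
noncomputable def hsTerm (x : ℝ) (z : EReal) : ℝ :=
  if z = ⊤ then 1 else if z = ⊥ then 0 else max 0 (1 - x * Real.exp (-z.toReal))

/-- Hockey-stick curve of a privacy loss distribution:
`h_L(x) = E_{Z∼L}[max (0, 1 - x e^{-Z})]`. -/
noncomputable def hsCurve (L : Measure EReal) (x : ℝ) : ℝ :=
  ∫ z, hsTerm x z ∂L

/-- Convolution of two distributions on the extended reals: the law of `Z₁ + Z₂` for
independent `Z₁ ∼ L₁`, `Z₂ ∼ L₂`. -/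
noncomputable def pldConv (L₁ L₂ : Measure EReal) : Measure EReal :=
  (L₁.prod L₂).map (fun p => p.1 + p.2)

/-- `x · e^{-z}` as a real number (with `x · e^{-∞} := 0`). -/
noncomputable def scaleExpNeg (x : ℝ) (z : EReal) : ℝ :=
  if z = ⊤ then 0 else x * Real.exp (-z.toReal)


lemma measurable_erealAdd2 : Measurable (fun p : EReal × EReal => p.1 + p.2) := by
  classical
  have h : (fun p : EReal × EReal => p.1 + p.2) =
      fun p => if p.1 = ⊥ ∨ p.2 = ⊥ then ⊥ else if p.1 = ⊤ ∨ p.2 = ⊤ then ⊤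
        else ((p.1.toReal + p.2.toReal : ℝ) : EReal) := by
    funext p
    obtain ⟨a, b⟩ := p
    induction a using EReal.rec <;> induction b using EReal.rec <;>
      simp [EReal.top_add_of_ne_bot, EReal.add_top_of_ne_bot, ← EReal.coe_add]
  rw [h]
  refine Measurable.ite ?_ measurable_const (Measurable.ite ?_ measurable_const ?_)
  · exact ((measurable_fst (measurableSet_singleton ⊥)).union
      (measurable_snd (measurableSet_singleton ⊥)))
  · exact ((measurable_fst (measurableSet_singleton ⊤)).union
      (measurable_snd (measurableSet_singleton ⊤)))
  · exact (measurable_fst.ereal_toReal.add measurable_snd.ereal_toReal).coe_real_ereal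

lemma measurable_hsTerm (x : ℝ) : Measurable (hsTerm x) := by
  classical
  unfold hsTerm
  refine Measurable.ite (measurableSet_singleton ⊤) measurable_const
    (Measurable.ite (measurableSet_singleton ⊥) measurable_const ?_)
  exact measurable_const.max ((measurable_const.sub
    ((measurable_ereal_toReal.neg.exp).const_mul x)))

lemma hsTerm_bound (x : ℝ) (hx : 0 ≤ x) (z : EReal) : ‖hsTerm x z‖ ≤ 1 := by
  unfold hsTerm
  split_ifs with h1 h2
  · simp
  · simp
  · rw [Real.norm_eq_abs, abs_of_nonneg (le_max_left _ _)]
    refine max_le (by norm_num) ?_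
    nlinarith [Real.exp_pos (-z.toReal)]

lemma hsTerm_add (x : ℝ) {z₁ z₂ : EReal} (h1 : z₁ ≠ ⊥) (h2 : z₂ ≠ ⊥) :
    hsTerm x (z₁ + z₂) = hsTerm (scaleExpNeg x z₁) z₂ := by
  induction z₁ using EReal.rec with
  | bot => exact absurd rfl h1
  | top =>
    rw [EReal.top_add_of_ne_bot h2]
    induction z₂ using EReal.rec <;> simp [hsTerm, scaleExpNeg] at h2 ⊢
  | coe a =>
    induction z₂ using EReal.rec with
    | bot => exact absurd rfl h2
    | top => rw [EReal.add_top_of_ne_bot h1]; simp [hsTerm]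
    | coe b =>
      rw [← EReal.coe_add]
      simp only [hsTerm, scaleExpNeg, EReal.coe_ne_top, EReal.coe_ne_bot, if_false,
        EReal.toReal_coe]
      rw [neg_add, Real.exp_add]
      ring_nf
/-- `h_{L₁⊕L₂}(x) = E_{Z∼L₁}[h_{L₂}(x e^{-Z})]` for PLDs `L₁, L₂` and `x > 0`. -/
theorem stmt15 (L₁ L₂ : Measure EReal) (h₁ : IsPLD L₁) (h₂ : IsPLD L₂)
    (x : ℝ) (hx : 0 < x) :
    hsCurve (pldConv L₁ L₂) x = ∫ z, hsCurve L₂ (scaleExpNeg x z) ∂L₁ := by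
  obtain ⟨hp₁, hb₁, -⟩ := h₁
  obtain ⟨hp₂, hb₂, -⟩ := h₂
  haveI := hp₁; haveI := hp₂
  have hmeas : Measurable (fun p : EReal × EReal => hsTerm x (p.1 + p.2)) :=
    (measurable_hsTerm x).comp measurable_erealAdd2
  have hint : Integrable (fun p : EReal × EReal => hsTerm x (p.1 + p.2)) (L₁.prod L₂) :=
    (integrable_const (1 : ℝ)).mono' hmeas.aestronglyMeasurable
      (ae_of_all _ fun p => hsTerm_bound x hx.le _)
  rw [hsCurve, pldConv,
    integral_map measurable_erealAdd2.aemeasurable (measurable_hsTerm x).aestronglyMeasurable,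
    integral_prod _ hint]
  refine integral_congr_ae ?_
  have hae₁ : ∀ᵐ z₁ ∂L₁, z₁ ≠ ⊥ := by
    have hs : {z : EReal | ¬ z ≠ ⊥} = {⊥} := by ext z; simp
    rw [ae_iff, hs]; exact hb₁
  have hae₂ : ∀ᵐ z₂ ∂L₂, z₂ ≠ ⊥ := by
    have hs : {z : EReal | ¬ z ≠ ⊥} = {⊥} := by ext z; simp
    rw [ae_iff, hs]; exact hb₂
  filter_upwards [hae₁] with z₁ hz₁
  rw [hsCurve]
  refine integral_congr_ae ?_
  filter_upwards [hae₂] with z₂ hz₂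
  exact hsTerm_add x hz₁ hz₂
end
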